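/- arXiv:1911.08189 — 4 statements merged into one kernel-verified Lean document; each statement's English description precedes it below -/
import Mathlib

section
/- Let P be an L-convex polyomino with distinct row lengths g_1 < g_2 < ... < g_r, where g_i occurs a_i times among the row lengths, and distinct column lengths w_1 < ... < w_s with multiplicities b_1,...,b_s. Then the following are equivalent: (i) g_ℓ = a_1 + a_2 + ... + a_ℓ for all ℓ = 1,...,r; (ii) w_ℓ = b_1 + ... + b_ℓ for all ℓ = 1,...,s. -/
/-- Two cells of `ℤ × ℤ` are adjacent if they share an edge. -/
def CellAdj (a b : ℤ × ℤ) : Prop :=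
  (a.1 = b.1 ∧ (a.2 = b.2 + 1 ∨ b.2 = a.2 + 1)) ∨
  (a.2 = b.2 ∧ (a.1 = b.1 + 1 ∨ b.1 = a.1 + 1))

/-- `P` is an L-convex polyomino: it is row convex, column convex, and any two of
its cells are joined by a path of distinct cells of `P` with at most one change of
direction. Cells are recorded as `(row, column)`. -/
def IsLConvex (P : Finset (ℤ × ℤ)) : Prop :=
  (∀ i j j' j'' : ℤ, (i, j) ∈ P → (i, j'') ∈ P → j ≤ j' → j' ≤ j'' → (i, j') ∈ P) ∧
  (∀ i i' i'' j : ℤ, (i, j) ∈ P → (i'', j) ∈ P → i ≤ i' → i' ≤ i'' → (i', j) ∈ P) ∧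
  (∀ a ∈ P, ∀ b ∈ P, ∃ (k : ℕ) (c : ℕ → ℤ × ℤ),
    c 0 = a ∧ c k = b ∧ (∀ i ≤ k, c i ∈ P) ∧
    (∀ i < k, CellAdj (c i) (c (i + 1))) ∧
    (∀ i j, i ≤ k → j ≤ k → c i = c j → i = j) ∧
    ((Finset.Ioo 0 k).filter (fun i =>
      (c (i - 1)).1 ≠ (c (i + 1)).1 ∧ (c (i - 1)).2 ≠ (c (i + 1)).2)).card ≤ 1)

/-- Number of cells of `P` in row `i`. -/
def rowCount (P : Finset (ℤ × ℤ)) (i : ℤ) : ℕ := (P.filter (fun c => c.1 = i)).card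

/-- Number of cells of `P` in column `j`. -/
def colCount (P : Finset (ℤ × ℤ)) (j : ℤ) : ℕ := (P.filter (fun c => c.2 = j)).card

/-- The multiset of row lengths of `P` (one entry per occupied row). -/
def rowMultiset (P : Finset (ℤ × ℤ)) : Multiset ℕ :=
  (P.image Prod.fst).val.map (rowCount P)

/-- The multiset of column lengths of `P` (one entry per occupied column). -/
def colMultiset (P : Finset (ℤ × ℤ)) : Multiset ℕ :=
  (P.image Prod.snd).val.map (colCount P)

/-- The Ferrer diagram (as a set of cells in `ℤ × ℤ`) with `n` left-justified
rows, row `i` (0-based) having `h i` cells. -/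
def ferrerCellsZ (n : ℕ) (h : ℕ → ℕ) : Finset (ℤ × ℤ) :=
  (Finset.range n).biUnion
    (fun i => (Finset.range (h i)).image (fun (j : ℕ) => ((i : ℤ), (j : ℤ))))

namespace LCX

def Cross (P : Finset (ℤ × ℤ)) : Prop :=
  ∀ p ∈ P, ∀ q ∈ P, (p.1, q.2) ∈ P ∨ (q.1, p.2) ∈ P

def tr (P : Finset (ℤ × ℤ)) : Finset (ℤ × ℤ) := P.image Prod.swap

lemma mem_tr {P : Finset (ℤ × ℤ)} {i j : ℤ} : (i, j) ∈ tr P ↔ (j, i) ∈ P := by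
  simp only [tr, Finset.mem_image]
  constructor
  · rintro ⟨c, hc, h⟩
    have : c = (j, i) := by
      cases c; simpa [Prod.swap, Prod.ext_iff, and_comm] using h
    rwa [this] at hc
  · intro h; exact ⟨(j, i), h, rfl⟩

lemma tr_tr (P : Finset (ℤ × ℤ)) : tr (tr P) = P := by
  ext ⟨i, j⟩; rw [mem_tr, mem_tr]

lemma cross_tr {P : Finset (ℤ × ℤ)} (h : Cross P) : Cross (tr P) := by
  rintro ⟨pi, pj⟩ hp ⟨qi, qj⟩ hq
  rw [mem_tr] at hp hq
  rcases h _ hq _ hp with h1 | h1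
  · exact Or.inl (mem_tr.2 h1)
  · exact Or.inr (mem_tr.2 h1)


def rowSet (P : Finset (ℤ × ℤ)) (i : ℤ) : Finset ℤ :=
  (P.filter (fun c => c.1 = i)).image Prod.snd
def colSet (P : Finset (ℤ × ℤ)) (j : ℤ) : Finset ℤ :=
  (P.filter (fun c => c.2 = j)).image Prod.fst

lemma mem_rowSet {P : Finset (ℤ × ℤ)} {i j : ℤ} : j ∈ rowSet P i ↔ (i, j) ∈ P := by
  simp only [rowSet, Finset.mem_image, Finset.mem_filter]
  constructor
  · rintro ⟨⟨a, b⟩, ⟨hc, h1⟩, h2⟩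
    simp only at h1 h2; rw [← h1, ← h2]; exact hc
  · intro h; exact ⟨(i, j), ⟨h, rfl⟩, rfl⟩

lemma mem_colSet {P : Finset (ℤ × ℤ)} {i j : ℤ} : i ∈ colSet P j ↔ (i, j) ∈ P := by
  simp only [colSet, Finset.mem_image, Finset.mem_filter]
  constructor
  · rintro ⟨⟨a, b⟩, ⟨hc, h1⟩, h2⟩
    simp only at h1 h2; rw [← h1, ← h2]; exact hc
  · intro h; exact ⟨(i, j), ⟨h, rfl⟩, rfl⟩

lemma rowCount_eq_card {P : Finset (ℤ × ℤ)} (i : ℤ) : rowCount P i = (rowSet P i).card := by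
  rw [rowSet, rowCount, eq_comm]
  apply Finset.card_image_of_injOn
  rintro ⟨a, b⟩ ha ⟨a', b'⟩ ha' h
  simp only [Finset.mem_coe, Finset.mem_filter] at ha ha'
  simp only at h
  simp [Prod.ext_iff, ha.2, ha'.2, h]

lemma colCount_eq_card {P : Finset (ℤ × ℤ)} (j : ℤ) : colCount P j = (colSet P j).card := by
  rw [colSet, colCount, eq_comm]
  apply Finset.card_image_of_injOn
  rintro ⟨a, b⟩ ha ⟨a', b'⟩ ha' h
  simp only [Finset.mem_coe, Finset.mem_filter] at ha ha'
  simp only at h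
  simp [Prod.ext_iff, ha.2, ha'.2, h]

lemma rowSet_tr {P : Finset (ℤ × ℤ)} (j : ℤ) : rowSet (tr P) j = colSet P j := by
  ext i; rw [mem_rowSet, mem_colSet, mem_tr]

lemma colSet_tr {P : Finset (ℤ × ℤ)} (i : ℤ) : colSet (tr P) i = rowSet P i := by
  ext j; rw [mem_colSet, mem_rowSet, mem_tr]

lemma rowCount_tr {P : Finset (ℤ × ℤ)} (j : ℤ) : rowCount (tr P) j = colCount P j := by
  rw [rowCount_eq_card, colCount_eq_card, rowSet_tr]

lemma colCount_tr {P : Finset (ℤ × ℤ)} (i : ℤ) : colCount (tr P) i = rowCount P i := by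
  rw [colCount_eq_card, rowCount_eq_card, colSet_tr]

def rows (P : Finset (ℤ × ℤ)) : Finset ℤ := P.image Prod.fst
def cols (P : Finset (ℤ × ℤ)) : Finset ℤ := P.image Prod.snd

lemma mem_rows {P : Finset (ℤ × ℤ)} {i : ℤ} : i ∈ rows P ↔ ∃ j, (i, j) ∈ P := by
  simp only [rows, Finset.mem_image]
  constructor
  · rintro ⟨⟨a, b⟩, hc, h⟩; exact ⟨b, by rwa [← h]⟩
  · rintro ⟨j, h⟩; exact ⟨(i, j), h, rfl⟩

lemma mem_cols {P : Finset (ℤ × ℤ)} {j : ℤ} : j ∈ cols P ↔ ∃ i, (i, j) ∈ P := by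
  simp only [cols, Finset.mem_image]
  constructor
  · rintro ⟨⟨a, b⟩, hc, h⟩; exact ⟨a, by rwa [← h]⟩
  · rintro ⟨i, h⟩; exact ⟨(i, j), h, rfl⟩

lemma rows_tr {P : Finset (ℤ × ℤ)} : rows (tr P) = cols P := by
  ext i; rw [mem_rows, mem_cols]; simp only [mem_tr]

lemma cols_tr {P : Finset (ℤ × ℤ)} : cols (tr P) = rows P := by
  ext i; rw [mem_cols, mem_rows]; simp only [mem_tr]

lemma rowMultiset_eq (P : Finset (ℤ × ℤ)) : rowMultiset P = (rows P).val.map (rowCount P) := rfl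
lemma colMultiset_eq (P : Finset (ℤ × ℤ)) : colMultiset P = (cols P).val.map (colCount P) := rfl

lemma rowMultiset_tr {P : Finset (ℤ × ℤ)} : rowMultiset (tr P) = colMultiset P := by
  rw [rowMultiset_eq, colMultiset_eq, rows_tr]
  exact Multiset.map_congr rfl (fun j _ => rowCount_tr j)

lemma colMultiset_tr {P : Finset (ℤ × ℤ)} : colMultiset (tr P) = rowMultiset P := by
  rw [← rowMultiset_tr (P := tr P), tr_tr]

lemma rowSet_comparable {P : Finset (ℤ × ℤ)} (h : Cross P) (i i' : ℤ) :
    rowSet P i ⊆ rowSet P i' ∨ rowSet P i' ⊆ rowSet P i := by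
  by_cases hs : rowSet P i ⊆ rowSet P i'
  · exact Or.inl hs
  · right
    rw [Finset.not_subset] at hs
    obtain ⟨j0, hj0, hj0'⟩ := hs
    intro j' hj'
    rw [mem_rowSet] at hj0 hj' ⊢
    rcases h _ hj0 _ hj' with h1 | h1
    · exact h1
    · exact absurd (mem_rowSet.2 h1) hj0'

lemma rowSet_nested {P : Finset (ℤ × ℤ)} (h : Cross P) {i i' : ℤ}
    (hc : rowCount P i ≤ rowCount P i') : rowSet P i ⊆ rowSet P i' := by
  rcases rowSet_comparable h i i' with h1 | h1
  · exact h1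
  · rw [rowCount_eq_card, rowCount_eq_card] at hc
    rw [Finset.eq_of_subset_of_card_le h1 hc]

lemma colSet_nested {P : Finset (ℤ × ℤ)} (h : Cross P) {j j' : ℤ}
    (hc : colCount P j ≤ colCount P j') : colSet P j ⊆ colSet P j' := by
  rw [← rowSet_tr, ← rowSet_tr]
  exact rowSet_nested (cross_tr h) (by rwa [rowCount_tr, rowCount_tr])

def NrowF (P : Finset (ℤ × ℤ)) (k : ℕ) : ℕ :=
  ((rows P).filter (fun i => k ≤ rowCount P i)).card
def NcolF (P : Finset (ℤ × ℤ)) (k : ℕ) : ℕ :=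
  ((cols P).filter (fun j => k ≤ colCount P j)).card

lemma NrowF_tr {P : Finset (ℤ × ℤ)} (k : ℕ) : NrowF (tr P) k = NcolF P k := by
  rw [NrowF, NcolF, rows_tr]
  congr 1
  exact Finset.filter_congr (fun j _ => by rw [rowCount_tr])

lemma NcolF_tr {P : Finset (ℤ × ℤ)} (k : ℕ) : NcolF (tr P) k = NrowF P k := by
  rw [← NrowF_tr (P := tr P), tr_tr]

lemma colSet_subset_rows {P : Finset (ℤ × ℤ)} (j : ℤ) : colSet P j ⊆ rows P := by
  intro i hi
  rw [mem_colSet] at hi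
  exact mem_rows.2 ⟨j, hi⟩

lemma rowSet_subset_cols {P : Finset (ℤ × ℤ)} (i : ℤ) : rowSet P i ⊆ cols P := by
  intro j hj
  rw [mem_rowSet] at hj
  exact mem_cols.2 ⟨i, hj⟩

lemma galois {P : Finset (ℤ × ℤ)} (h : Cross P) {k t : ℕ} (ht : 1 ≤ t)
    (h2 : t ≤ NcolF P k) : k ≤ NrowF P t := by
  have hB : ((cols P).filter (fun j => k ≤ colCount P j)).Nonempty := by
    rw [← Finset.card_pos]; exact lt_of_lt_of_le ht h2
  obtain ⟨j0, hj0mem, hj0min⟩ := Finset.exists_min_image _ (colCount P) hB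
  have hj0' := Finset.mem_filter.1 hj0mem
  have hsub : colSet P j0 ⊆ (rows P).filter (fun i => t ≤ rowCount P i) := by
    intro i hi
    rw [Finset.mem_filter]
    refine ⟨colSet_subset_rows j0 hi, ?_⟩
    have hBsub : (cols P).filter (fun j => k ≤ colCount P j) ⊆ rowSet P i := by
      intro j hj
      have := colSet_nested h (hj0min j hj)
      rw [mem_rowSet]
      rw [mem_colSet] at hi
      exact mem_colSet.1 (this (mem_colSet.2 hi))
    calc t ≤ ((cols P).filter (fun j => k ≤ colCount P j)).card := h2
      _ ≤ (rowSet P i).card := Finset.card_le_card hBsub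
      _ = rowCount P i := (rowCount_eq_card i).symm
  calc k ≤ colCount P j0 := hj0'.2
    _ = (colSet P j0).card := colCount_eq_card j0
    _ ≤ _ := Finset.card_le_card hsub

lemma galois' {P : Finset (ℤ × ℤ)} (h : Cross P) {k t : ℕ} (ht : 1 ≤ t)
    (h2 : t ≤ NrowF P k) : k ≤ NcolF P t := by
  rw [← NcolF_tr] at h2
  rw [← NrowF_tr]
  exact galois (cross_tr h) ht h2

def NM (M : Multiset ℕ) (k : ℕ) : ℕ := (M.filter (fun x => k ≤ x)).card

lemma NM_row {P : Finset (ℤ × ℤ)} (k : ℕ) : NM (rowMultiset P) k = NrowF P k := by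
  rw [NM, rowMultiset_eq, Multiset.filter_map, Multiset.card_map, NrowF]
  rfl

lemma NM_col {P : Finset (ℤ × ℤ)} (k : ℕ) : NM (colMultiset P) k = NcolF P k := by
  rw [← rowMultiset_tr, NM_row, NrowF_tr]

lemma card_rowMultiset (P : Finset (ℤ × ℤ)) :
    Multiset.card (rowMultiset P) = (rows P).card := by
  rw [rowMultiset_eq, Multiset.card_map]; rfl

lemma card_colMultiset (P : Finset (ℤ × ℤ)) :
    Multiset.card (colMultiset P) = (cols P).card := by
  rw [← rowMultiset_tr, card_rowMultiset, rows_tr]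

lemma mem_rowMultiset {P : Finset (ℤ × ℤ)} {v : ℕ} :
    v ∈ rowMultiset P ↔ ∃ i ∈ rows P, rowCount P i = v := by
  rw [rowMultiset_eq, Multiset.mem_map]
  simp only [Finset.mem_val]

lemma mem_colMultiset {P : Finset (ℤ × ℤ)} {v : ℕ} :
    v ∈ colMultiset P ↔ ∃ j ∈ cols P, colCount P j = v := by
  rw [← rowMultiset_tr, mem_rowMultiset, rows_tr]
  constructor
  · rintro ⟨j, hj, hc⟩; exact ⟨j, hj, by rwa [rowCount_tr] at hc⟩
  · rintro ⟨j, hj, hc⟩; exact ⟨j, hj, by rwa [rowCount_tr]⟩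

/-- The key combinatorial step. -/
lemma forward {P : Finset (ℤ × ℤ)} (hne : P.Nonempty) (h : Cross P)
    (H : ∀ v ∈ rowMultiset P, v + NM (rowMultiset P) (v + 1) = Multiset.card (rowMultiset P)) :
    ∀ u ∈ colMultiset P, u + NM (colMultiset P) (u + 1) = Multiset.card (colMultiset P) := by
  -- rewrite everything geometrically
  simp only [NM_row, card_rowMultiset, mem_rowMultiset, forall_exists_index] at H
  have Hrow : ∀ i ∈ rows P, rowCount P i + NrowF P (rowCount P i + 1) = (rows P).card := by
    intro i hi
    exact H (rowCount P i) i ⟨hi, rfl⟩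
  simp only [NM_col, card_colMultiset, mem_colMultiset, forall_exists_index]
  set n := (rows P).card with hn
  -- rows nonempty
  have hrne : (rows P).Nonempty := by
    obtain ⟨⟨i, j⟩, hij⟩ := hne
    exact ⟨i, mem_rows.2 ⟨j, hij⟩⟩
  -- maximal row
  obtain ⟨imax, himax, himaxmax⟩ := Finset.exists_max_image (rows P) (rowCount P) hrne
  -- N (max+1) = 0
  have hN0 : NrowF P (rowCount P imax + 1) = 0 := by
    rw [NrowF, Finset.card_eq_zero, Finset.filter_eq_empty_iff]
    intro i hi
    have := himaxmax i hi
    omega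
  have hmaxn : rowCount P imax = n := by
    have := Hrow imax himax
    omega
  -- cols = rowSet imax, so m = n
  have hcols : cols P = rowSet P imax := by
    apply Finset.Subset.antisymm
    · intro j hj
      obtain ⟨i, hij⟩ := mem_cols.1 hj
      have hi : i ∈ rows P := mem_rows.2 ⟨j, hij⟩
      exact rowSet_nested h (himaxmax i hi) (mem_rowSet.2 hij)
    · exact rowSet_subset_cols imax
  have hmn : (cols P).card = n := by
    rw [hcols, ← rowCount_eq_card, hmaxn]
  intro u j hj
  obtain ⟨hj, hcu⟩ := hj
  rw [hmn]
  -- u ≤ n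
  have hcolsub := colSet_subset_rows (P := P) j
  have hun : u ≤ n := by
    rw [← hcu, colCount_eq_card]
    exact Finset.card_le_card hcolsub
  rcases eq_or_lt_of_le hun with hueq | hult
  · -- u = n : Ncol (u+1) = 0
    have : NcolF P (u + 1) = 0 := by
      rw [NcolF, Finset.card_eq_zero, Finset.filter_eq_empty_iff]
      intro j' hj'
      intro hle
      have h1 : colCount P j' ≤ n := by
        rw [colCount_eq_card]
        exact Finset.card_le_card (colSet_subset_rows j')
      omega
    rw [this]; omega
  · -- u < n
    set D := rows P \ colSet P j with hD
    have hcardD : D.card + u = n := by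
      rw [hD, Finset.card_sdiff_of_subset hcolsub, ← colCount_eq_card, hcu]
      omega
    have hDne : D.Nonempty := by
      rw [← Finset.card_pos]; omega
    obtain ⟨iV, hiV, hiVmax⟩ := Finset.exists_max_image D (rowCount P) hDne
    have hiVrows : iV ∈ rows P := (Finset.sdiff_subset) hiV
    have hiVnotin : (iV, j) ∉ P := by
      intro hmem
      have : iV ∈ colSet P j := mem_colSet.2 hmem
      rw [hD] at hiV
      exact (Finset.mem_sdiff.1 hiV).2 this
    set V := rowCount P iV with hV
    -- D = rows.filter (rowCount ≤ V)
    have hDeq : D = (rows P).filter (fun i => rowCount P i ≤ V) := by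
      apply Finset.Subset.antisymm
      · intro i hi
        rw [Finset.mem_filter]
        exact ⟨(Finset.sdiff_subset) hi, hiVmax i hi⟩
      · intro i hi
        rw [Finset.mem_filter] at hi
        rw [hD, Finset.mem_sdiff]
        refine ⟨hi.1, ?_⟩
        intro hc
        have hsub := rowSet_nested h hi.2
        have : (iV, j) ∈ P := mem_rowSet.1 (hsub (mem_rowSet.2 (mem_colSet.1 hc)))
        exact hiVnotin this
    -- partition
    have hpart : ((rows P).filter (fun i => rowCount P i ≤ V)).card
        + NrowF P (V + 1) = n := by
      rw [NrowF, hn]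
      have : ∀ i : ℤ, (V + 1 ≤ rowCount P i) ↔ ¬(rowCount P i ≤ V) := by intro i; omega
      rw [Finset.filter_congr (fun i _ => this i)]
      exact Finset.card_filter_add_card_filter_not _
    have hHV := Hrow iV hiVrows
    rw [← hV] at hHV
    have hDV : D.card = V := by
      rw [hDeq] at hcardD ⊢
      omega
    have hVu : V + u = n := by omega
    have hNV1 : NrowF P (V + 1) = u := by omega
    -- Nrow V ≥ u + 1
    have hNrowV : u + 1 ≤ NrowF P V := by
      have hins : insert iV (colSet P j) ⊆ (rows P).filter (fun i => V ≤ rowCount P i) := by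
        intro i hi
        rw [Finset.mem_insert] at hi
        rw [Finset.mem_filter]
        rcases hi with rfl | hi
        · exact ⟨hiVrows, le_refl V⟩
        · refine ⟨hcolsub hi, ?_⟩
          by_contra hlt
          push_neg at hlt
          have hsub := rowSet_nested h (le_of_lt hlt)
          have : (iV, j) ∈ P := mem_rowSet.1 (hsub (mem_rowSet.2 (mem_colSet.1 hi)))
          exact hiVnotin this
      have hcard : (insert iV (colSet P j)).card = u + 1 := by
        rw [Finset.card_insert_of_notMem (fun hc => hiVnotin (mem_colSet.1 hc)),
          ← colCount_eq_card, hcu]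
      calc u + 1 = (insert iV (colSet P j)).card := hcard.symm
        _ ≤ _ := Finset.card_le_card hins
    -- conclude via galois
    have h1 : V ≤ NcolF P (u + 1) := galois' h (by omega) hNrowV
    have h2 : NcolF P (u + 1) ≤ V := by
      by_contra hc
      push_neg at hc
      have := galois h (k := u + 1) (t := V + 1) (by omega) (by omega)
      omega
    omega

lemma filter_le_card {M : Multiset ℕ} {r : ℕ} {g : Fin r → ℕ} (hg : StrictMono g)
    (hmem : ∀ x : ℕ, x ∈ M ↔ ∃ ℓ, x = g ℓ) (ℓ : Fin r) :
    (M.filter (fun x => x ≤ g ℓ)).card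
      = ∑ i ∈ Finset.univ.filter (fun i => i ≤ ℓ), M.count (g i) := by
  have htf : M.toFinset = Finset.image g Finset.univ := by
    ext x
    rw [Multiset.mem_toFinset, hmem, Finset.mem_image]
    simp [eq_comm]
  have h1 : (M.filter (fun x => x ≤ g ℓ)).card
      = ∑ x ∈ (M.toFinset.filter (fun x => x ≤ g ℓ)), M.count x := by
    rw [← Multiset.toFinset_sum_count_eq (M.filter (fun x => x ≤ g ℓ)),
      Multiset.toFinset_filter]
    apply Finset.sum_congr rfl
    intro x hx
    rw [Finset.mem_filter] at hx
    rw [Multiset.count_filter, if_pos hx.2]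
  rw [h1, htf, Finset.filter_image, Finset.sum_image]
  · apply Finset.sum_congr
    · apply Finset.filter_congr
      intro i _
      simp [hg.le_iff_le]
    · intros; rfl
  · intro i _ i' _ hii'
    exact hg.injective hii'

lemma translate {M : Multiset ℕ} {r : ℕ} {g : Fin r → ℕ} {a : Fin r → ℕ}
    (hg : StrictMono g) (hmem : ∀ x : ℕ, x ∈ M ↔ ∃ ℓ, x = g ℓ)
    (ha : ∀ ℓ, a ℓ = M.count (g ℓ)) :
    (∀ ℓ : Fin r, g ℓ = ∑ i ∈ Finset.univ.filter (fun i => i ≤ ℓ), a i) ↔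
    (∀ v ∈ M, v + NM M (v + 1) = Multiset.card M) := by
  have hsplit : ∀ v : ℕ, (M.filter (fun x => x ≤ v)).card + NM M (v + 1)
      = Multiset.card M := by
    intro v
    rw [NM]
    have : M.filter (fun x => v + 1 ≤ x) = M.filter (fun x => ¬(x ≤ v)) := by
      apply Multiset.filter_congr
      intro x _
      constructor <;> omega
    rw [this, ← Multiset.card_add, Multiset.filter_add_not]
  have hsum : ∀ ℓ : Fin r, (∑ i ∈ Finset.univ.filter (fun i => i ≤ ℓ), a i)
      = (M.filter (fun x => x ≤ g ℓ)).card := by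
    intro ℓ
    rw [filter_le_card hg hmem ℓ]
    exact Finset.sum_congr rfl (fun i _ => ha i)
  constructor
  · intro hi v hv
    obtain ⟨ℓ, rfl⟩ := (hmem v).1 hv
    have := hsplit (g ℓ)
    rw [← (hsum ℓ), ← hi ℓ] at this
    exact this
  · intro hii ℓ
    have hvmem : g ℓ ∈ M := (hmem (g ℓ)).2 ⟨ℓ, rfl⟩
    have h1 := hii (g ℓ) hvmem
    have h2 := hsplit (g ℓ)
    rw [hsum ℓ]
    omega

lemma cellAdj_cases {p q : ℤ × ℤ} (h : CellAdj p q) :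
    (p.1 = q.1 ∧ p.2 ≠ q.2) ∨ (p.2 = q.2 ∧ p.1 ≠ q.1) := by
  rcases h with ⟨h1, h2⟩ | ⟨h1, h2⟩
  · exact Or.inl ⟨h1, by omega⟩
  · exact Or.inr ⟨h1, by omega⟩

lemma cellAdj_swap {p q : ℤ × ℤ} (h : CellAdj p q) : CellAdj p.swap q.swap := by
  rcases h with h | h
  · exact Or.inr h
  · exact Or.inl h

lemma straight_aux (c : ℕ → ℤ × ℤ) (k l r : ℕ) (hrk : r ≤ k)
    (hadj : ∀ i < k, CellAdj (c i) (c (i + 1)))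
    (hinj : ∀ i j, i ≤ k → j ≤ k → c i = c j → i = j)
    (hnb : ∀ i, l < i → i < r →
      ((c (i - 1)).1 = (c (i + 1)).1 ∨ (c (i - 1)).2 = (c (i + 1)).2))
    (hfirst : l < r → (c l).1 = (c (l + 1)).1) :
    ∀ i, l ≤ i → i ≤ r → (c i).1 = (c l).1 := by
  have claim : ∀ d, l + d ≤ r →
      (c (l + d)).1 = (c l).1 ∧ (l + d < r → (c (l + d)).1 = (c (l + d + 1)).1) := by
    intro d
    induction d with
    | zero => exact fun _ => ⟨rfl, fun h2 => hfirst (by omega)⟩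
    | succ d ih =>
      intro hdr
      obtain ⟨ih1, ih2⟩ := ih (by omega)
      have hstep : (c (l + d)).1 = (c (l + d + 1)).1 := ih2 (by omega)
      refine ⟨hstep ▸ ih1, ?_⟩
      intro hr2
      have hdisj := hnb (l + d + 1) (by omega) (by omega)
      have hsub : l + d + 1 - 1 = l + d := by omega
      rw [hsub] at hdisj
      have hadj1 := hadj (l + d + 1) (by omega)
      rcases hdisj with h1 | h1
      · exact hstep.symm.trans h1
      · rcases cellAdj_cases hadj1 with ⟨h2, _⟩ | ⟨h2, _⟩
        · exact h2
        · exfalso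
          have hceq : c (l + d) = c (l + d + 1) := by
            apply Prod.ext
            · exact hstep
            · rw [h1, ← h2]
          have := hinj (l + d) (l + d + 1) (by omega) (by omega) hceq
          omega
  intro i hi1 hi2
  have hle : l + (i - l) = i := by omega
  rw [← hle]
  exact (claim (i - l) (by omega)).1

lemma straight (c : ℕ → ℤ × ℤ) (k l r : ℕ) (hlr : l ≤ r) (hrk : r ≤ k)
    (hadj : ∀ i < k, CellAdj (c i) (c (i + 1)))
    (hinj : ∀ i j, i ≤ k → j ≤ k → c i = c j → i = j)
    (hnb : ∀ i, l < i → i < r →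
      ((c (i - 1)).1 = (c (i + 1)).1 ∨ (c (i - 1)).2 = (c (i + 1)).2)) :
    (∀ i, l ≤ i → i ≤ r → (c i).1 = (c l).1) ∨
    (∀ i, l ≤ i → i ≤ r → (c i).2 = (c l).2) := by
  rcases eq_or_lt_of_le hlr with rfl | hlt
  · left
    intro i h1 h2
    have : i = l := le_antisymm h2 h1
    rw [this]
  · have hadjl := hadj l (lt_of_lt_of_le hlt hrk)
    rcases cellAdj_cases hadjl with ⟨h1, _⟩ | ⟨h1, _⟩
    · left
      exact straight_aux c k l r hrk hadj hinj hnb (fun _ => h1)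
    · right
      exact straight_aux (fun i => (c i).swap) k l r hrk
        (fun i hi => cellAdj_swap (hadj i hi))
        (fun i j hi hj hcc => hinj i j hi hj (Prod.swap_injective hcc))
        (fun i hi1 hi2 => (hnb i hi1 hi2).symm)
        (fun _ => h1)

lemma cross_of_isLConvex {P : Finset (ℤ × ℤ)} (hP : IsLConvex P) : Cross P := by
  intro p hp q hq
  obtain ⟨k, c, hc0, hck, hmem, hadj, hinj, hbend⟩ := hP.2.2 p hp q hq
  set F := (Finset.Ioo 0 k).filter (fun i =>
      (c (i - 1)).1 ≠ (c (i + 1)).1 ∧ (c (i - 1)).2 ≠ (c (i + 1)).2) with hF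
  have notbend : ∀ i, 0 < i → i < k → i ∉ F →
      ((c (i - 1)).1 = (c (i + 1)).1 ∨ (c (i - 1)).2 = (c (i + 1)).2) := by
    intro i h1 h2 hnotin
    have : ¬((c (i - 1)).1 ≠ (c (i + 1)).1 ∧ (c (i - 1)).2 ≠ (c (i + 1)).2) := by
      intro hc
      exact hnotin (Finset.mem_filter.2 ⟨Finset.mem_Ioo.2 ⟨h1, h2⟩, hc⟩)
    rcases not_and_or.1 this with h | h
    · exact Or.inl (not_not.1 h)
    · exact Or.inr (not_not.1 h)
  rcases F.eq_empty_or_nonempty with hFe | ⟨i0, hi0⟩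
  · -- no bend: path straight
    rcases straight c k 0 k (Nat.zero_le k) le_rfl hadj hinj
        (fun i h1 h2 => notbend i h1 h2 (by rw [hFe]; exact Finset.notMem_empty _))
      with hs | hs
    · right
      have h1 : q.1 = p.1 := by rw [← hc0, ← hck]; exact hs k (Nat.zero_le k) le_rfl
      rw [h1, Prod.mk.eta]
      exact hp
    · left
      have h1 : q.2 = p.2 := by rw [← hc0, ← hck]; exact hs k (Nat.zero_le k) le_rfl
      rw [h1, Prod.mk.eta]
      exact hp
  · -- one bend at i0
    have hi0' := Finset.mem_filter.1 hi0
    have hi0Ioo := Finset.mem_Ioo.1 hi0'.1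
    have huniq : ∀ x ∈ F, x = i0 := fun x hx => Finset.card_le_one.1 hbend x hx i0 hi0
    have hnb1 : ∀ i, 0 < i → i < i0 →
        ((c (i - 1)).1 = (c (i + 1)).1 ∨ (c (i - 1)).2 = (c (i + 1)).2) := by
      intro i h1 h2
      refine notbend i h1 (by omega) (fun hin => ?_)
      have := huniq i hin; omega
    have hnb2 : ∀ i, i0 < i → i < k →
        ((c (i - 1)).1 = (c (i + 1)).1 ∨ (c (i - 1)).2 = (c (i + 1)).2) := by
      intro i h1 h2
      refine notbend i (by omega) h2 (fun hin => ?_)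
      have := huniq i hin; omega
    have hs1 := straight c k 0 i0 (Nat.zero_le i0) (le_of_lt hi0Ioo.2) hadj hinj hnb1
    have hs2 := straight c k i0 k (le_of_lt hi0Ioo.2) le_rfl hadj hinj hnb2
    have hci0mem : c i0 ∈ P := hmem i0 (le_of_lt hi0Ioo.2)
    rcases hs1 with hA | hA <;> rcases hs2 with hB | hB
    · -- both rows: p.1 = q.1
      right
      have e1 : (c i0).1 = (c 0).1 := hA i0 (Nat.zero_le i0) le_rfl
      have e2 : (c k).1 = (c i0).1 := hB k (le_of_lt hi0Ioo.2) le_rfl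
      have : q.1 = p.1 := by rw [← hc0, ← hck, e2, e1]
      rw [this, Prod.mk.eta]
      exact hp
    · -- row then column: c i0 = (p.1, q.2)
      left
      have e1 : (c i0).1 = (c 0).1 := hA i0 (Nat.zero_le i0) le_rfl
      have e2 : (c k).2 = (c i0).2 := hB k (le_of_lt hi0Ioo.2) le_rfl
      have : c i0 = (p.1, q.2) := by
        apply Prod.ext
        · rw [e1, hc0]
        · rw [← e2, hck]
      rwa [this] at hci0mem
    · -- column then row: c i0 = (q.1, p.2)
      right
      have e1 : (c i0).2 = (c 0).2 := hA i0 (Nat.zero_le i0) le_rfl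
      have e2 : (c k).1 = (c i0).1 := hB k (le_of_lt hi0Ioo.2) le_rfl
      have : c i0 = (q.1, p.2) := by
        apply Prod.ext
        · rw [← e2, hck]
        · rw [e1, hc0]
      rwa [this] at hci0mem
    · -- both columns: p.2 = q.2
      left
      have e1 : (c i0).2 = (c 0).2 := hA i0 (Nat.zero_le i0) le_rfl
      have e2 : (c k).2 = (c i0).2 := hB k (le_of_lt hi0Ioo.2) le_rfl
      have : q.2 = p.2 := by rw [← hc0, ← hck, e2, e1]
      rw [this, Prod.mk.eta]
      exact hp

end LCX

/-- Let `P` be an L-convex polyomino whose distinct row lengths are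
`g 0 < g 1 < … < g (r-1)` with multiplicities `a i`, and whose distinct column
lengths are `w 0 < … < w (s-1)` with multiplicities `b i`. Then
`g ℓ = a 0 + … + a ℓ` holds for all `ℓ` if and only if `w ℓ = b 0 + … + b ℓ`
holds for all `ℓ`. -/
theorem stmt14 (P : Finset (ℤ × ℤ)) (hne : P.Nonempty) (hP : IsLConvex P)
    (r s : ℕ) (g : Fin r → ℕ) (w : Fin s → ℕ) (a : Fin r → ℕ) (b : Fin s → ℕ)
    (hg : StrictMono g) (hw : StrictMono w)
    (hgmem : ∀ x : ℕ, x ∈ rowMultiset P ↔ ∃ ℓ, x = g ℓ)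
    (hwmem : ∀ x : ℕ, x ∈ colMultiset P ↔ ∃ ℓ, x = w ℓ)
    (ha : ∀ ℓ, a ℓ = (rowMultiset P).count (g ℓ))
    (hb : ∀ ℓ, b ℓ = (colMultiset P).count (w ℓ)) :
    (∀ ℓ : Fin r, g ℓ = ∑ i ∈ Finset.univ.filter (fun i => i ≤ ℓ), a i) ↔
    (∀ ℓ : Fin s, w ℓ = ∑ i ∈ Finset.univ.filter (fun i => i ≤ ℓ), b i) := by
  have hcross : LCX.Cross P := LCX.cross_of_isLConvex hP
  rw [LCX.translate hg hgmem ha, LCX.translate hw hwmem hb]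
  constructor
  · exact LCX.forward hne hcross
  · intro H v hv
    have hne' : (LCX.tr P).Nonempty := hne.image _
    have h' := LCX.forward hne' (LCX.cross_tr hcross)
      (by rw [LCX.rowMultiset_tr]; exact H)
    rw [LCX.colMultiset_tr] at h'
    exact h' v hv
end

section
/- Let P be an L-convex polyomino and P_0, P_1, ..., P_t its derived sequence (repeatedly deleting the unique maximal rectangle of full width). Then the bounding box of P_k is a square for all 0 ≤ k ≤ t if and only if the distinct row lengths g_1 < ... < g_r of P with multiplicities a_1,...,a_r satisfy g_ℓ = a_1 + ... + a_ℓ for all ℓ. -/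
/-- `Q` is obtained from `P` by deleting the (unique) maximal rectangle of full
width: rows `s, …, s+d-1` of `P` are exactly the full-width rows (containing a cell
in every occupied column of `P`), all other rows are strictly shorter, and `Q`
consists of the rows below row `s` together with the rows from `s+d` on, shifted
down by `d` to close the gap. -/
def DerivedStep (P Q : Finset (ℤ × ℤ)) : Prop :=
  ∃ (s : ℤ) (d : ℕ), 0 < d ∧
    (∀ i : ℤ, s ≤ i → i < s + d → rowCount P i = (P.image Prod.snd).card) ∧
    (∀ i : ℤ, i < s ∨ s + d ≤ i → rowCount P i < (P.image Prod.snd).card) ∧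
    Q = (P.filter (fun c => c.1 < s)) ∪
        ((P.filter (fun c => s + d ≤ c.1)).image (fun c => (c.1 - d, c.2)))

/-! Each derived step deletes exactly the rows of maximal length, and that length is the
width of the current polyomino. Hence the row lengths of `P_k` are those of `P` that are at
most the width `w_k` of `P_k`, and `w_0 > w_1 > ⋯ > w_t` runs through all distinct row lengths
of `P`. So `P_k` has `a_1 + ⋯ + a_ℓ` rows where `g_ℓ = w_k` is its width, and the squareness
of all `P_k` is the identity `g_ℓ = a_1 + ⋯ + a_ℓ` for all `ℓ`. -/

lemma rowCount_le_card_image_snd (P : Finset (ℤ × ℤ)) (i : ℤ) :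
    rowCount P i ≤ (P.image Prod.snd).card :=
  Finset.card_le_card_of_injOn Prod.snd
    (fun _ hc => Finset.mem_image_of_mem _ (Finset.mem_filter.1 hc).1)
    (fun _ hc _ hc' h =>
      Prod.ext ((Finset.mem_filter.1 hc).2.trans (Finset.mem_filter.1 hc').2.symm) h)

lemma le_of_mem_rowMultiset {P : Finset (ℤ × ℤ)} {x : ℕ} (hx : x ∈ rowMultiset P) :
    x ≤ (P.image Prod.snd).card := by
  obtain ⟨i, -, rfl⟩ := Multiset.mem_map.1 hx
  exact rowCount_le_card_image_snd P i

lemma card_image_fst_eq_card_rowMultiset (P : Finset (ℤ × ℤ)) :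
    (P.image Prod.fst).card = Multiset.card (rowMultiset P) :=
  (Multiset.card_map _ _).symm

lemma rowMultiset_filter_fst (P : Finset (ℤ × ℤ)) (p : ℤ → Prop) [DecidablePred p] :
    rowMultiset (P.filter (fun c => p c.1)) =
      ((P.image Prod.fst).filter p).val.map (rowCount P) := by
  rw [rowMultiset, Finset.filter_image]
  refine Multiset.map_congr rfl fun i hi => ?_
  obtain ⟨c, hc, rfl⟩ := Finset.mem_image.1 hi
  simp only [rowCount, Finset.filter_filter]
  congr 1
  grind

lemma rowMultiset_image_fst {P : Finset (ℤ × ℤ)} {ψ : ℤ → ℤ}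
    (hψ : Set.InjOn ψ (P.image Prod.fst)) :
    rowMultiset (P.image (fun c => (ψ c.1, c.2))) = rowMultiset P := by
  have hrows :
      (P.image (fun c => (ψ c.1, c.2))).image Prod.fst = (P.image Prod.fst).image ψ := by
    simp only [Finset.image_image]; rfl
  rw [rowMultiset, hrows, Finset.image_val_of_injOn hψ, Multiset.map_map, rowMultiset]
  refine Multiset.map_congr rfl fun i hi => ?_
  have hfiber : (P.image (fun c => (ψ c.1, c.2))).filter (fun c => c.1 = ψ i) =
      (P.filter (fun c => c.1 = i)).image (fun c => (ψ c.1, c.2)) := by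
    rw [Finset.filter_image]
    congr 1
    ext c
    simp only [Finset.mem_filter, and_congr_right_iff]
    exact fun hc => hψ.eq_iff (Finset.mem_image_of_mem _ hc) hi
  rw [Function.comp_apply, rowCount, hfiber, Finset.card_image_of_injOn]
  · rfl
  · intro c hc c' hc' h
    simp only [Prod.ext_iff, Finset.coe_filter, Set.mem_ofPred_eq] at h hc hc'
    exact Prod.ext (hc.2.trans hc'.2.symm) h.2

namespace DerivedStep

variable {P Q : Finset (ℤ × ℤ)}

lemma nonempty (h : DerivedStep P Q) : P.Nonempty := by
  obtain ⟨s, d, -, -, hless, -⟩ := h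
  rw [Finset.nonempty_iff_ne_empty]
  rintro rfl
  simpa [rowCount] using hless (s - 1) (Or.inl (by omega))

lemma card_image_snd_mem_rowMultiset (h : DerivedStep P Q) :
    (P.image Prod.snd).card ∈ rowMultiset P := by
  have hwidth := Finset.card_pos.2 (h.nonempty.image Prod.snd)
  obtain ⟨s, d, hd, hfull, -, -⟩ := h
  have hs : rowCount P s = (P.image Prod.snd).card := hfull s le_rfl (by omega)
  obtain ⟨c, hc⟩ := Finset.card_pos.1 (hs ▸ hwidth)
  rw [Finset.mem_filter] at hc
  exact hs ▸ Multiset.mem_map_of_mem _ (Finset.mem_image.2 ⟨c, hc⟩)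

lemma exists_eq_image_filter (h : DerivedStep P Q) : ∃ (s : ℤ) (d : ℕ),
    (∀ i ∈ P.image Prod.fst, rowCount P i ≠ (P.image Prod.snd).card ↔ i < s ∨ s + d ≤ i) ∧
    Q = (P.filter (fun c => c.1 < s ∨ s + d ≤ c.1)).image
      (fun c : ℤ × ℤ => (if c.1 < s then c.1 else c.1 - d, c.2)) := by
  obtain ⟨s, d, -, hfull, hless, rfl⟩ := h
  refine ⟨s, d, fun i _ => ⟨fun hi => ?_, fun hi => (hless i hi).ne⟩, ?_⟩
  · by_contra! hmid
    exact hi (hfull i hmid.1 hmid.2)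
  · ext ⟨i, j⟩
    simp only [Finset.mem_union, Finset.mem_filter, Finset.mem_image, Prod.mk.injEq]
    constructor
    · rintro (⟨hc, hi⟩ | ⟨⟨i', j'⟩, ⟨hc, hi'⟩, hi, rfl⟩)
      · exact ⟨(i, j), ⟨hc, Or.inl hi⟩, by simp [hi]⟩
      · refine ⟨(i', j'), ⟨hc, Or.inr hi'⟩, ?_, rfl⟩
        simp only at hi hi' ⊢
        rwa [if_neg (by omega)]
    · rintro ⟨⟨i', j'⟩, ⟨hc, hi'⟩, hi, rfl⟩
      simp only at hi ⊢
      split_ifs at hi with hlt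
      · exact Or.inl ⟨hi ▸ hc, hi ▸ hlt⟩
      · exact Or.inr ⟨(i', j'), ⟨hc, by omega⟩, by omega, rfl⟩

lemma rowMultiset_eq (h : DerivedStep P Q) :
    rowMultiset Q = (rowMultiset P).filter (· ≠ (P.image Prod.snd).card) := by
  obtain ⟨s, d, hrows, rfl⟩ := h.exists_eq_image_filter
  rw [rowMultiset_image_fst (ψ := fun i => if i < s then i else i - d),
    rowMultiset_filter_fst P (fun i => i < s ∨ s + d ≤ i), rowMultiset, Multiset.filter_map]
  · exact congrArg _ (Multiset.filter_congr fun i hi => (hrows i hi).symm)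
  · intro i hi i' hi' h
    simp only [Finset.coe_image, Finset.coe_filter, Set.mem_image, Set.mem_ofPred_eq] at hi hi'
    obtain ⟨_, ⟨-, hi⟩, rfl⟩ := hi
    obtain ⟨_, ⟨-, hi'⟩, rfl⟩ := hi'
    simp only at h
    split_ifs at h <;> omega

end DerivedStep

/-- Abstracts the row-length multisets `M k` and widths `w k` of a derived sequence. -/
structure IsMaxPeeling {α : Type*} [LinearOrder α] (M : ℕ → Multiset α) (w : ℕ → α) (t : ℕ) :
    Prop where
  max_mem : ∀ k ≤ t, w k ∈ M k
  le_max : ∀ k ≤ t, ∀ x ∈ M k, x ≤ w k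
  succ_eq_filter_ne : ∀ k < t, M (k + 1) = (M k).filter (· ≠ w k)
  eq_max_of_mem_last : ∀ x ∈ M t, x = w t

namespace IsMaxPeeling

variable {α : Type*} [LinearOrder α] {M : ℕ → Multiset α} {w : ℕ → α} {t : ℕ}

lemma eq_filter_le (h : IsMaxPeeling M w t) : ∀ k ≤ t, M k = (M 0).filter (· ≤ w k) := by
  intro k hk
  induction k with
  | zero => exact (Multiset.filter_eq_self.2 (h.le_max 0 hk)).symm
  | succ k ih =>
    have hsucc : M (k + 1) = (M 0).filter (fun x => x ≠ w k ∧ x ≤ w k) := by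
      rw [h.succ_eq_filter_ne k hk, ih (by omega), Multiset.filter_filter]
    have hlt : w (k + 1) < w k := by
      have := h.max_mem (k + 1) hk
      rw [hsucc, Multiset.mem_filter] at this
      exact lt_of_le_of_ne this.2.2 this.2.1
    rw [hsucc]
    refine Multiset.filter_congr fun x hx => ⟨fun hxk => h.le_max (k + 1) hk x ?_, fun hx' => ?_⟩
    · exact hsucc ▸ Multiset.mem_filter.2 ⟨hx, hxk⟩
    · exact ⟨(hx'.trans_lt hlt).ne, (hx'.trans_lt hlt).le⟩

lemma exists_eq_of_mem (h : IsMaxPeeling M w t) {x : α} (hx : x ∈ M 0) : ∃ k ≤ t, w k = x := by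
  have : ∀ k ≤ t, (∃ j < k, w j = x) ∨ x ∈ M k := by
    intro k hk
    induction k with
    | zero => exact Or.inr hx
    | succ k ih =>
      rcases ih (by omega) with ⟨j, hj, hjx⟩ | hxk
      · exact Or.inl ⟨j, by omega, hjx⟩
      · by_cases hxw : x = w k
        · exact Or.inl ⟨k, by omega, hxw.symm⟩
        · exact Or.inr (h.succ_eq_filter_ne k (by omega) ▸ Multiset.mem_filter.2 ⟨hxk, hxw⟩)
  rcases this t le_rfl with ⟨j, hj, hjx⟩ | hxt
  · exact ⟨j, hj.le, hjx⟩
  · exact ⟨t, le_rfl, (h.eq_max_of_mem_last x hxt).symm⟩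

lemma forall_iff (h : IsMaxPeeling M w t) (p : α → Prop) :
    (∀ k ≤ t, p (w k)) ↔ ∀ x ∈ M 0, p x := by
  refine ⟨fun hp x hx => ?_, fun hp k hk => hp _ ?_⟩
  · obtain ⟨k, hk, rfl⟩ := h.exists_eq_of_mem hx
    exact hp k hk
  · have := h.max_mem k hk
    rw [h.eq_filter_le k hk] at this
    exact Multiset.mem_of_mem_filter this

end IsMaxPeeling

lemma isMaxPeeling_rowMultiset {Ps : ℕ → Finset (ℤ × ℤ)} {t : ℕ}
    (hstep : ∀ k < t, DerivedStep (Ps k) (Ps (k + 1))) (hlast : DerivedStep (Ps t) ∅) :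
    IsMaxPeeling (fun k => rowMultiset (Ps k)) (fun k => ((Ps k).image Prod.snd).card) t := by
  refine ⟨fun k hk => ?_, fun k _ x hx => le_of_mem_rowMultiset hx,
    fun k hk => (hstep k hk).rowMultiset_eq, fun x hx => ?_⟩
  · rcases hk.lt_or_eq with hk | rfl
    · exact (hstep k hk).card_image_snd_mem_rowMultiset
    · exact hlast.card_image_snd_mem_rowMultiset
  · have hempty := hlast.rowMultiset_eq
    rw [show rowMultiset (∅ : Finset (ℤ × ℤ)) = 0 from rfl, eq_comm,
      Multiset.filter_eq_nil] at hempty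
    exact not_not.1 (hempty x hx)

lemma card_filter_le_eq_sum_count {α : Type*} [LinearOrder α] {M : Multiset α} {r : ℕ}
    {g : Fin r → α} (hg : StrictMono g) (hgmem : ∀ x, x ∈ M ↔ ∃ ℓ, x = g ℓ) (ℓ : Fin r) :
    Multiset.card (M.filter (· ≤ g ℓ)) = ∑ i ∈ Finset.univ.filter (· ≤ ℓ), M.count (g i) := by
  have hsupp : M.toFinset = Finset.univ.image g := by
    ext x
    simp [hgmem, eq_comm]
  rw [← Multiset.toFinset_sum_count_eq, Multiset.toFinset_filter, hsupp, Finset.filter_image,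
    Finset.sum_image hg.injective.injOn]
  refine Finset.sum_congr (Finset.filter_congr fun i _ => hg.le_iff_le) fun i hi => ?_
  exact Multiset.count_filter_of_pos (hg.monotone (Finset.mem_filter.1 hi).2)

theorem stmt15_general (P : Finset (ℤ × ℤ))
    (Ps : ℕ → Finset (ℤ × ℤ)) (t : ℕ) (hP0 : Ps 0 = P)
    (hPstep : ∀ k, k < t → DerivedStep (Ps k) (Ps (k + 1)))
    (hPend : DerivedStep (Ps t) ∅)
    (r : ℕ) (g a : Fin r → ℕ) (hg : StrictMono g)
    (hgmem : ∀ x : ℕ, x ∈ rowMultiset P ↔ ∃ ℓ, x = g ℓ)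
    (ha : ∀ ℓ, a ℓ = (rowMultiset P).count (g ℓ)) :
    (∀ k, k ≤ t → ((Ps k).image Prod.fst).card = ((Ps k).image Prod.snd).card) ↔
    (∀ ℓ : Fin r, g ℓ = ∑ i ∈ Finset.univ.filter (fun i => i ≤ ℓ), a i) := by
  have hpeel := isMaxPeeling_rowMultiset hPstep hPend
  have hsquare : ∀ k ≤ t, ((Ps k).image Prod.fst).card = ((Ps k).image Prod.snd).card ↔
      Multiset.card ((rowMultiset P).filter (· ≤ ((Ps k).image Prod.snd).card)) =
        ((Ps k).image Prod.snd).card := fun k hk => by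
    rw [card_image_fst_eq_card_rowMultiset, hpeel.eq_filter_le k hk, hP0]
  have hwidths := hpeel.forall_iff fun x => Multiset.card ((rowMultiset P).filter (· ≤ x)) = x
  rw [forall₂_congr hsquare, hwidths, hP0]
  simp only [ha, ← card_filter_le_eq_sum_count hg hgmem]
  exact ⟨fun h ℓ => (h _ ((hgmem _).2 ⟨ℓ, rfl⟩)).symm,
    fun h x hx => by obtain ⟨ℓ, rfl⟩ := (hgmem x).1 hx; exact (h ℓ).symm⟩

/-- Let `P` be an L-convex polyomino with derived sequence `Ps 0 = P, …, Ps t`,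
and distinct row lengths `g 0 < … < g (r-1)` with multiplicities `a i`. Then the
bounding box of every `Ps k` (`k ≤ t`) is a square (its number of occupied rows
equals its number of occupied columns) if and only if `g ℓ = a 0 + … + a ℓ` for
all `ℓ`. -/
theorem stmt15 (P : Finset (ℤ × ℤ)) (hne : P.Nonempty) (hP : IsLConvex P)
    (Ps : ℕ → Finset (ℤ × ℤ)) (t : ℕ) (hP0 : Ps 0 = P)
    (hPstep : ∀ k, k < t → DerivedStep (Ps k) (Ps (k + 1)))
    (hPend : DerivedStep (Ps t) ∅)
    (r : ℕ) (g a : Fin r → ℕ) (hg : StrictMono g)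
    (hgmem : ∀ x : ℕ, x ∈ rowMultiset P ↔ ∃ ℓ, x = g ℓ)
    (ha : ∀ ℓ, a ℓ = (rowMultiset P).count (g ℓ)) :
    (∀ k, k ≤ t → ((Ps k).image Prod.fst).card = ((Ps k).image Prod.snd).card) ↔
    (∀ ℓ : Fin r, g ℓ = ∑ i ∈ Finset.univ.filter (fun i => i ≤ ℓ), a i) :=
  stmt15_general P Ps t hP0 hPstep hPend r g a hg hgmem ha
end

section
/- Let Q be the poset on {H_1 < H_2 < ... < H_n} ∪ {V_1 < ... < V_m} given by the two chains together with the extra cover relations H_{n-s} < V_{t+1} (so the cover relation from one chain to the other), with 0 < s < n and 0 < t < m, and suppose every maximal chain of Q has m elements (i.e., m ≥ n and m ≥ n + m - (s+t)). Then the number of strictly order-reversing surjections realizing minimal elements of T(Q̂) — equivalently, the number of integer sequences 0 < a_1 < a_2 < ... < a_n ≤ m with m - t < a_{s+1} ≤ m - (n - s) + 1 — equals Σ_{i = m-t}^{m-(n-s)} C(i, s)·C(m-i-1, n-s-1). -/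
/-!
A sequence `0 < a₁ < ⋯ < aₙ ≤ m` is the increasing enumeration of an `n`-subset of `{1, …, m}`.
Fixing `a_{s+1} = i + 1` splits that subset into an `s`-subset of `{1, …, i}` and an
`(n - s - 1)`-subset of `{i + 2, …, m}`, chosen independently, so there are
`C(i, s) · C(m - i - 1, n - s - 1)` such sequences; summing over the admissible values of `i`
gives the formula.
-/

open Finset

namespace Finset

variable {α : Type*} [LinearOrder α]

theorem insert_filter_lt_union_filter_gt {S : Finset α} {v : α} (hv : v ∈ S) :
    insert v ({x ∈ S | x < v} ∪ {x ∈ S | v < x}) = S := by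
  ext x
  simp only [mem_insert, mem_union, mem_filter]
  rcases lt_trichotomy x v with h | rfl | h <;> grind

theorem card_filter_lt_add_card_filter_gt {S : Finset α} {v : α} (hv : v ∈ S) :
    #{x ∈ S | x < v} + #{x ∈ S | v < x} + 1 = #S := by
  conv_rhs => rw [← insert_filter_lt_union_filter_gt hv]
  rw [card_insert_of_notMem (by simp), card_union_of_disjoint]
  exact disjoint_filter.2 fun x _ h h' => (h.trans h').false

theorem filter_lt_insert_union {A B : Finset α} {v : α} (hA : ∀ x ∈ A, x < v)
    (hB : ∀ x ∈ B, v < x) : {x ∈ insert v (A ∪ B) | x < v} = A := by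
  ext x
  simp only [mem_filter, mem_insert, mem_union]
  grind

theorem filter_gt_insert_union {A B : Finset α} {v : α} (hA : ∀ x ∈ A, x < v)
    (hB : ∀ x ∈ B, v < x) : {x ∈ insert v (A ∪ B) | v < x} = B := by
  ext x
  simp only [mem_filter, mem_insert, mem_union]
  grind

theorem card_powersetCard_filter_rank_eq {U : Finset α} {v : α} (hv : v ∈ U) {n s : ℕ}
    (hsn : s < n) :
    #{S ∈ powersetCard n U | v ∈ S ∧ #{x ∈ S | x < v} = s} =
      (#{x ∈ U | x < v}).choose s * (#{x ∈ U | v < x}).choose (n - s - 1) := by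
  rw [← card_powersetCard, ← card_powersetCard, ← card_product]
  refine card_nbij' (fun S => ({x ∈ S | x < v}, {x ∈ S | v < x}))
    (fun p => insert v (p.1 ∪ p.2)) ?_ ?_ ?_ ?_
  · intro S hS
    simp only [coe_filter, mem_powersetCard, Set.mem_ofPred_eq, coe_product, Set.mem_prod,
      mem_coe] at hS ⊢
    obtain ⟨⟨hSU, hcard⟩, hvS, hrank⟩ := hS
    have := card_filter_lt_add_card_filter_gt hvS
    exact ⟨⟨filter_subset_filter _ hSU, hrank⟩, filter_subset_filter _ hSU, by omega⟩
  · rintro ⟨A, B⟩ hAB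
    simp only [coe_product, Set.mem_prod, mem_coe, mem_powersetCard] at hAB
    obtain ⟨⟨hA, hAcard⟩, hB, hBcard⟩ := hAB
    replace hA x (hx : x ∈ A) := mem_filter.1 (hA hx)
    replace hB x (hx : x ∈ B) := mem_filter.1 (hB hx)
    have hlt := filter_lt_insert_union (fun x hx => (hA x hx).2) fun x hx => (hB x hx).2
    have hgt := filter_gt_insert_union (fun x hx => (hA x hx).2) fun x hx => (hB x hx).2
    have hcard := card_filter_lt_add_card_filter_gt (mem_insert_self v (A ∪ B))
    simp only [coe_filter, mem_powersetCard, Set.mem_ofPred_eq, hlt, hgt] at hcard ⊢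
    have hU : insert v (A ∪ B) ⊆ U :=
      insert_subset hv (union_subset (fun x hx => (hA x hx).1) fun x hx => (hB x hx).1)
    exact ⟨⟨hU, by omega⟩, mem_insert_self _ _, hAcard⟩
  · intro S hS
    simp only [coe_filter, mem_powersetCard, Set.mem_ofPred_eq] at hS
    exact insert_filter_lt_union_filter_gt hS.2.1
  · rintro ⟨A, B⟩ hAB
    simp only [coe_product, Set.mem_prod, mem_coe, mem_powersetCard] at hAB
    obtain ⟨⟨hA, -⟩, hB, -⟩ := hAB
    replace hA x (hx : x ∈ A) := (mem_filter.1 (hA hx)).2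
    replace hB x (hx : x ∈ B) := (mem_filter.1 (hB hx)).2
    exact Prod.ext (filter_lt_insert_union hA hB) (filter_gt_insert_union hA hB)

theorem card_filter_lt_image_of_strictMono {n : ℕ} {f : Fin n → α} (hf : StrictMono f)
    (j : Fin n) : #{x ∈ univ.image f | x < f j} = j := by
  rw [filter_image, card_image_of_injective _ hf.injective]
  simp only [hf.lt_iff_lt, filter_gt_eq_Iio, Fin.card_Iio]

end Finset

theorem card_strictMono_fin_eq_card_powersetCard {n m s v : ℕ} (hsn : s < n) :
    #{a : Fin n → Fin (m + 1) |
        StrictMono a ∧ 0 < (a ⟨0, Nat.zero_lt_of_lt hsn⟩ : ℕ) ∧ (a ⟨s, hsn⟩ : ℕ) = v} =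
      #{S ∈ powersetCard n (Icc 1 m) | v ∈ S ∧ #{x ∈ S | x < v} = s} := by
  refine card_bij (fun a _ => univ.image fun j => (a j : ℕ)) ?_ ?_ ?_
  · intro a ha
    simp only [mem_filter, mem_univ, true_and] at ha
    obtain ⟨ha, ha0, rfl⟩ := ha
    have hval : StrictMono fun j => (a j : ℕ) := fun i j h => ha h
    simp only [mem_filter, mem_powersetCard]
    refine ⟨⟨fun x hx => ?_, ?_⟩, mem_image_of_mem _ (mem_univ _),
      card_filter_lt_image_of_strictMono hval _⟩
    · obtain ⟨j, -, rfl⟩ := mem_image.1 hx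
      have : (a ⟨0, Nat.zero_lt_of_lt hsn⟩ : ℕ) ≤ a j := hval.monotone (Nat.zero_le j)
      exact mem_Icc.2 ⟨by omega, Fin.is_le _⟩
    · rw [card_image_of_injective _ hval.injective, card_univ, Fintype.card_fin]
  · intro a ha b hb hab
    simp only [mem_filter, mem_univ, true_and] at ha hb
    have hrange := congrArg ((↑) : Finset ℕ → Set ℕ) hab
    simp only [coe_image, coe_univ, Set.image_univ] at hrange
    have hva : StrictMono fun j => (a j : ℕ) := fun i j h => ha.1 h
    have hvb : StrictMono fun j => (b j : ℕ) := fun i j h => hb.1 h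
    have := (hva.range_inj hvb).1 hrange
    exact funext fun j => Fin.ext (congrFun this j)
  · intro S hS
    simp only [mem_filter, mem_powersetCard] at hS
    obtain ⟨⟨hSU, hcard⟩, hvS, hrank⟩ := hS
    have hle (j : Fin n) : S.orderEmbOfFin hcard j ∈ Icc 1 m := hSU (orderEmbOfFin_mem S hcard j)
    refine ⟨fun j => ⟨S.orderEmbOfFin hcard j, Nat.lt_succ_of_le (mem_Icc.1 (hle j)).2⟩, ?_,
      image_orderEmbOfFin_univ S hcard⟩
    obtain ⟨j, hj⟩ : v ∈ Set.range (S.orderEmbOfFin hcard) := by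
      rwa [range_orderEmbOfFin]
    have hjs : j = ⟨s, hsn⟩ := by
      ext
      rw [← card_filter_lt_image_of_strictMono (S.orderEmbOfFin hcard).strictMono j,
        image_orderEmbOfFin_univ, hj, hrank]
    subst hjs
    simp only [mem_filter, mem_univ, true_and]
    exact ⟨fun i j h => Fin.mk_lt_mk.2 ((S.orderEmbOfFin hcard).strictMono h),
      (mem_Icc.1 (hle _)).1, hj⟩

theorem card_strictMono_fin_apply_eq {n m s v : ℕ} (hsn : s < n) (hv : 1 ≤ v) (hvm : v ≤ m) :
    #{a : Fin n → Fin (m + 1) |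
        StrictMono a ∧ 0 < (a ⟨0, Nat.zero_lt_of_lt hsn⟩ : ℕ) ∧ (a ⟨s, hsn⟩ : ℕ) = v} =
      (v - 1).choose s * (m - v).choose (n - s - 1) := by
  have hlt : {x ∈ Icc 1 m | x < v} = Ico 1 v := by
    ext; simp only [mem_filter, mem_Icc, mem_Ico]; omega
  have hgt : {x ∈ Icc 1 m | v < x} = Ioc v m := by
    ext; simp only [mem_filter, mem_Icc, mem_Ioc]; omega
  rw [card_strictMono_fin_eq_card_powersetCard,
    card_powersetCard_filter_rank_eq (mem_Icc.2 ⟨hv, hvm⟩) hsn, hlt, hgt, Nat.card_Ico,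
    Nat.card_Ioc]

/-- Count of strictly increasing integer sequences `0 < a₁ < … < a_n ≤ m`
(encoded as functions `Fin n → Fin (m+1)`) with
`m - t + 1 ≤ a_{s+1} ≤ m - (n - s) + 1`, in the case `m ≥ n` and
`m ≥ n + m - (s + t)` (i.e. `s + t ≥ n`):
it equals `Σ_{i=m-t}^{m-(n-s)} C(i, s) · C(m-i-1, n-s-1)`. -/
theorem stmt16 (n m s t : ℕ) (hsn : s < n)
    (hmn : n ≤ m) :
    (Finset.univ.filter (fun a : Fin n → Fin (m + 1) =>
      (∀ i j : Fin n, i < j → a i < a j) ∧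
      0 < (a ⟨0, by omega⟩ : ℕ) ∧
      m - t < (a ⟨s, hsn⟩ : ℕ) ∧ (a ⟨s, hsn⟩ : ℕ) ≤ m - (n - s) + 1)).card =
    ∑ i ∈ Finset.Icc (m - t) (m - (n - s)),
      Nat.choose i s * Nat.choose (m - i - 1) (n - s - 1) := by
  rw [card_eq_sum_card_fiberwise (f := fun a => (a ⟨s, hsn⟩ : ℕ) - 1)
    (t := Icc (m - t) (m - (n - s))) fun a ha => by
      simp only [coe_filter, Set.mem_ofPred_eq, mem_coe, mem_Icc] at ha ⊢; omega]
  refine sum_congr rfl fun i hi => ?_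
  rw [mem_Icc] at hi
  calc _ = #{a : Fin n → Fin (m + 1) |
        StrictMono a ∧ 0 < (a ⟨0, Nat.zero_lt_of_lt hsn⟩ : ℕ) ∧ (a ⟨s, hsn⟩ : ℕ) = i + 1} := by
        rw [filter_filter]
        refine congrArg card (filter_congr fun a _ => ⟨?_, ?_⟩)
        · rintro ⟨⟨hmono, h0, hlow, -⟩, hv⟩
          exact ⟨fun i j h => hmono i j h, h0, by omega⟩
        · rintro ⟨hmono, h0, hv⟩
          exact ⟨⟨fun i j h => hmono h, h0, by omega, by omega⟩, by omega⟩
    _ = _ := by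
        rw [card_strictMono_fin_apply_eq hsn (by omega) (by omega), Nat.add_sub_cancel,
          Nat.sub_sub m i 1]
end

section
/- For integers 0 < s < n and 0 < t < m with n ≥ m and n ≥ n + m - (s+t): the number of strictly increasing integer sequences 0 < b_1 < ... < b_m ≤ n satisfying m - t ≤ b_{m-t} ≤ s equals Σ_{i = m-t}^{s} C(i-1, m-t-1)·C(n-i, t). -/
lemma img_lt {S : Finset ℕ} {m : ℕ} (h : S.card = m) (j : Fin m) :
    (Finset.Iio j).image (S.orderEmbOfFin h) = S.filter (· < S.orderEmbOfFin h j) := by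
  ext x
  simp only [Finset.mem_image, Finset.mem_Iio, Finset.mem_filter]
  constructor
  · rintro ⟨j', hj', rfl⟩
    exact ⟨Finset.orderEmbOfFin_mem _ _ _, (S.orderEmbOfFin h).strictMono hj'⟩
  · rintro ⟨hxS, hx⟩
    have hr : x ∈ Set.range (S.orderEmbOfFin h) := by
      rw [Finset.range_orderEmbOfFin]; exact hxS
    obtain ⟨j', rfl⟩ := hr
    exact ⟨j', (S.orderEmbOfFin h).strictMono.lt_iff_lt.mp hx, rfl⟩

lemma img_gt {S : Finset ℕ} {m : ℕ} (h : S.card = m) (j : Fin m) :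
    (Finset.Ioi j).image (S.orderEmbOfFin h) = S.filter (S.orderEmbOfFin h j < ·) := by
  ext x
  simp only [Finset.mem_image, Finset.mem_Ioi, Finset.mem_filter]
  constructor
  · rintro ⟨j', hj', rfl⟩
    exact ⟨Finset.orderEmbOfFin_mem _ _ _, (S.orderEmbOfFin h).strictMono hj'⟩
  · rintro ⟨hxS, hx⟩
    have hr : x ∈ Set.range (S.orderEmbOfFin h) := by
      rw [Finset.range_orderEmbOfFin]; exact hxS
    obtain ⟨j', rfl⟩ := hr
    exact ⟨j', (S.orderEmbOfFin h).strictMono.lt_iff_lt.mp hx, rfl⟩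

lemma orderEmbOfFin_eq_of_count {S : Finset ℕ} {m : ℕ} (h : S.card = m) (j : Fin m) {i : ℕ}
    (hi : i ∈ S) (hcount : (S.filter (· < i)).card = (j : ℕ)) :
    S.orderEmbOfFin h j = i := by
  have hr : i ∈ Set.range (S.orderEmbOfFin h) := by
    rw [Finset.range_orderEmbOfFin]; exact hi
  obtain ⟨j', hj'⟩ := hr
  have : (S.filter (· < i)).card = (j' : ℕ) := by
    rw [← hj', ← img_lt h j', Finset.card_image_of_injective _ (S.orderEmbOfFin h).injective,
      Fin.card_Iio]
  have hjj : j = j' := by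
    apply Fin.ext; omega
  rw [hjj, hj']

/-- Count of strictly increasing integer sequences `0 < b₁ < … < b_m ≤ n`
(encoded as functions `Fin m → Fin (n+1)`) with `m - t ≤ b_{m-t} ≤ s`, in the case
`n ≥ m` and `n ≥ n + m - (s + t)` (i.e. `s + t ≥ m`):
it equals `Σ_{i=m-t}^{s} C(i-1, m-t-1) · C(n-i, t)`. -/
theorem stmt17 (n m s t : ℕ) (hs : 0 < s) (hsn : s < n) (ht : 0 < t) (htm : t < m)
    (hnm : m ≤ n) (hst : m ≤ s + t) :
    (Finset.univ.filter (fun b : Fin m → Fin (n + 1) =>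
      (∀ i j : Fin m, i < j → b i < b j) ∧
      0 < (b ⟨0, by omega⟩ : ℕ) ∧
      m - t ≤ (b ⟨m - t - 1, by omega⟩ : ℕ) ∧
      (b ⟨m - t - 1, by omega⟩ : ℕ) ≤ s)).card =
    ∑ i ∈ Finset.Icc (m - t) s,
      Nat.choose (i - 1) (m - t - 1) * Nat.choose (n - i) t := by
  have hposlt : m - t - 1 < m := by omega
  set pos : Fin m := ⟨m - t - 1, hposlt⟩ with hposdef
  set T := (Finset.Icc (m - t) s).sigma
      (fun i => (Finset.Ioo 0 i).powersetCard (m - t - 1) ×ˢ (Finset.Ioc i n).powersetCard t)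
      with hTdef
  have hT : T.card = ∑ i ∈ Finset.Icc (m - t) s,
      Nat.choose (i - 1) (m - t - 1) * Nat.choose (n - i) t := by
    rw [hTdef, Finset.card_sigma]
    refine Finset.sum_congr rfl fun i hi => ?_
    rw [Finset.card_product, Finset.card_powersetCard, Finset.card_powersetCard,
      Nat.card_Ioo, Nat.card_Ioc, Nat.sub_zero]
  rw [← hT]
  refine Finset.card_bij
    (fun b _ => ⟨(b pos : ℕ),
      ((Finset.Iio pos).image fun j => (b j : ℕ), (Finset.Ioi pos).image fun j => (b j : ℕ))⟩)
    ?_ ?_ ?_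
  · -- maps into T
    rintro b hb
    rw [Finset.mem_filter] at hb
    obtain ⟨-, hmono, h0, hge, hle⟩ := hb
    have hmono' : StrictMono b := fun i j hij => hmono i j hij
    rw [hTdef, Finset.mem_sigma, Finset.mem_product, Finset.mem_powersetCard,
      Finset.mem_powersetCard]
    refine ⟨Finset.mem_Icc.mpr ⟨hge, hle⟩, ⟨?_, ?_⟩, ?_, ?_⟩
    · intro x hx
      simp only [Finset.mem_image, Finset.mem_Iio] at hx
      obtain ⟨j, hj, rfl⟩ := hx
      refine Finset.mem_Ioo.mpr ⟨?_, ?_⟩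
      · rcases Nat.eq_zero_or_pos (j : ℕ) with hj0 | hj0
        · have : j = ⟨0, by omega⟩ := Fin.ext hj0
          rw [this]; exact h0
        · have : b ⟨0, by omega⟩ < b j := hmono _ _ (by simpa [Fin.lt_def] using hj0)
          omega
      · exact hmono _ _ hj
    · rw [Finset.card_image_of_injOn
        (Set.InjOn.mono (fun x _ => Set.mem_univ x)
          (fun x _ y _ hxy => hmono'.injective (Fin.val_injective hxy))),
        Fin.card_Iio]
    · intro x hx
      simp only [Finset.mem_image, Finset.mem_Ioi] at hx
      obtain ⟨j, hj, rfl⟩ := hx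
      exact Finset.mem_Ioc.mpr ⟨hmono _ _ hj, Nat.lt_succ_iff.mp (b j).isLt⟩
    · rw [Finset.card_image_of_injOn
        (Set.InjOn.mono (fun x _ => Set.mem_univ x)
          (fun x _ y _ hxy => hmono'.injective (Fin.val_injective hxy))),
        Fin.card_Ioi]
      have hposval : (pos : ℕ) = m - t - 1 := rfl
      omega
  · -- injective
    rintro b1 hb1 b2 hb2 heq
    rw [Finset.mem_filter] at hb1 hb2
    have hmono1 : StrictMono (fun j => (b1 j : ℕ)) := fun i j hij => hb1.2.1 i j hij
    have hmono2 : StrictMono (fun j => (b2 j : ℕ)) := fun i j hij => hb2.2.1 i j hij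
    obtain ⟨h1, h23⟩ := Sigma.ext_iff.mp heq
    obtain ⟨h2, h3⟩ := Prod.ext_iff.mp (eq_of_heq h23)
    dsimp only at h1 h2 h3
    have himg : Finset.univ.image (fun j => (b1 j : ℕ))
        = Finset.univ.image (fun j => (b2 j : ℕ)) := by
      have huniv : (Finset.univ : Finset (Fin m))
          = Finset.Iio pos ∪ {pos} ∪ Finset.Ioi pos := by
        ext j
        simp only [Finset.mem_univ, Finset.mem_union, Finset.mem_Iio, Finset.mem_Ioi,
          Finset.mem_singleton, true_iff]
        rcases lt_trichotomy j pos with h | h | h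
        · exact Or.inl (Or.inl h)
        · exact Or.inl (Or.inr h)
        · exact Or.inr h
      rw [huniv, Finset.image_union, Finset.image_union, Finset.image_union,
        Finset.image_union, h2, h3, Finset.image_singleton, Finset.image_singleton, h1]
    have hrange : Set.range (fun j => (b1 j : ℕ)) = Set.range (fun j => (b2 j : ℕ)) := by
      rw [← Set.image_univ, ← Set.image_univ, ← Finset.coe_univ, ← Finset.coe_image,
        ← Finset.coe_image, himg]
    haveI : WellFoundedLT (Fin m) := inferInstance
    have := (hmono1.range_inj hmono2).mp hrange
    funext j
    exact Fin.val_injective (congrFun this j)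
  · -- surjective
    rintro ⟨i, A, B⟩ hp
    simp only [hTdef, Finset.mem_sigma, Finset.mem_product, Finset.mem_powersetCard,
      Finset.mem_Icc] at hp
    obtain ⟨hi, ⟨hA, hAcard⟩, hB, hBcard⟩ := hp
    have hAlt : ∀ x ∈ A, 0 < x ∧ x < i := fun x hx => by
      have := hA hx; rw [Finset.mem_Ioo] at this; exact this
    have hBgt : ∀ x ∈ B, i < x ∧ x ≤ n := fun x hx => by
      have := hB hx; rw [Finset.mem_Ioc] at this; exact this
    have hiB : i ∉ B := fun h => absurd (hBgt i h).1 (lt_irrefl i)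
    set S : Finset ℕ := A ∪ insert i B with hSdef
    have hdisj : Disjoint A (insert i B) := by
      rw [Finset.disjoint_left]
      intro x hxA hxB
      rcases Finset.mem_insert.mp hxB with rfl | hxB
      · exact absurd (hAlt x hxA).2 (lt_irrefl x)
      · exact absurd ((hAlt x hxA).2.trans (hBgt x hxB).1) (lt_irrefl x)
    have hScard : S.card = m := by
      rw [hSdef, Finset.card_union_of_disjoint hdisj, Finset.card_insert_of_notMem hiB,
        hAcard, hBcard]
      omega
    have hSmem : ∀ x ∈ S, 0 < x ∧ x ≤ n := by
      intro x hx
      rcases Finset.mem_union.mp hx with hx | hx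
      · exact ⟨(hAlt x hx).1, by have := (hAlt x hx).2; omega⟩
      · rcases Finset.mem_insert.mp hx with rfl | hx
        · constructor <;> omega
        · exact ⟨by have := (hBgt x hx).1; omega, (hBgt x hx).2⟩
    set f := S.orderEmbOfFin hScard with hfdef
    have hfS : ∀ j, f j ∈ S := fun j => Finset.orderEmbOfFin_mem _ _ _
    refine ⟨fun j => ⟨f j, by have := (hSmem _ (hfS j)).2; omega⟩, ?_, ?_⟩
    · -- membership in LHS filter
      have hfiltlt : S.filter (· < i) = A := by
        ext x
        simp only [Finset.mem_filter]
        constructor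
        · rintro ⟨hxS, hxi⟩
          rcases Finset.mem_union.mp hxS with hx | hx
          · exact hx
          · rcases Finset.mem_insert.mp hx with rfl | hx
            · omega
            · exact absurd hxi (by have := (hBgt x hx).1; omega)
        · intro hx
          exact ⟨Finset.mem_union_left _ hx, (hAlt x hx).2⟩
      have hfpos : f pos = i := by
        refine orderEmbOfFin_eq_of_count hScard pos ?_ ?_
        · exact Finset.mem_union_right _ (Finset.mem_insert_self i B)
        · rw [hfiltlt, hAcard]
      rw [Finset.mem_filter]
      refine ⟨Finset.mem_univ _, fun a b' hab => ?_, ?_, ?_, ?_⟩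
      · exact f.strictMono hab
      · exact (hSmem _ (hfS ⟨0, by omega⟩)).1
      · show m - t ≤ f pos
        rw [hfpos]; exact hi.1
      · show f pos ≤ s
        rw [hfpos]; exact hi.2
    · -- maps back to ⟨i, A, B⟩
      have hfiltlt : S.filter (· < i) = A := by
        ext x
        simp only [Finset.mem_filter]
        constructor
        · rintro ⟨hxS, hxi⟩
          rcases Finset.mem_union.mp hxS with hx | hx
          · exact hx
          · rcases Finset.mem_insert.mp hx with rfl | hx
            · omega
            · exact absurd hxi (by have := (hBgt x hx).1; omega)
        · intro hx
          exact ⟨Finset.mem_union_left _ hx, (hAlt x hx).2⟩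
      have hfiltgt : S.filter (i < ·) = B := by
        ext x
        simp only [Finset.mem_filter]
        constructor
        · rintro ⟨hxS, hxi⟩
          rcases Finset.mem_union.mp hxS with hx | hx
          · exact absurd hxi (by have := (hAlt x hx).2; omega)
          · rcases Finset.mem_insert.mp hx with rfl | hx
            · omega
            · exact hx
        · intro hx
          exact ⟨Finset.mem_union_right _ (Finset.mem_insert_of_mem hx), (hBgt x hx).1⟩
      have hfpos : f pos = i := by
        refine orderEmbOfFin_eq_of_count hScard pos ?_ ?_
        · exact Finset.mem_union_right _ (Finset.mem_insert_self i B)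
        · rw [hfiltlt, hAcard]
      have e1 : (Finset.Iio pos).image (fun j : Fin m => ((⟨f j, by
          have := (hSmem _ (hfS j)).2; omega⟩ : Fin (n + 1)) : ℕ)) = A := by
        have : (Finset.Iio pos).image (fun j : Fin m => f j) = A := by
          rw [img_lt hScard pos, hfpos, hfiltlt]
        simpa using this
      have e2 : (Finset.Ioi pos).image (fun j : Fin m => ((⟨f j, by
          have := (hSmem _ (hfS j)).2; omega⟩ : Fin (n + 1)) : ℕ)) = B := by
        have : (Finset.Ioi pos).image (fun j : Fin m => f j) = B := by
          rw [img_gt hScard pos, hfpos, hfiltgt]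
        simpa using this
      exact Sigma.ext_iff.mpr ⟨hfpos, heq_of_eq (Prod.ext_iff.mpr ⟨e1, e2⟩)⟩
end
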